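/- For every type-preserving boundary strategy χ of Max, every strategy μ of Min in the closed region graph T̄, every configuration q, and every n ∈ ℕ, the total time of the first n transitions of the run from q under (μ,χ) is at least the total time of the first n transitions of the run from q under (μ[q,χ],χ), where μ[q,χ] is any type-preserving boundary strategy of Min such that the run from q under (μ[q,χ],χ) has the same type as the run from q under (μ,χ). Symmetrically, for every type-preserving boundary strategy μ of Min, every strategy χ of Max in T̄, every configuration q and every n ∈ ℕ, the total time of the first n transitions of the run from q under (μ,χ) is at most that of the run from q under (μ,χ[q,μ]), where χ[q,μ] is any type-preserving boundary strategy of Max such that the run from q under (μ,χ[q,μ]) has the same type as the run from q under (μ,χ). -/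

import Mathlib

noncomputable section

attribute [local instance] Classical.propDecidable

/-- A two-player (Min/Max) game arena with real-valued step costs. -/
structure Arena (Conf Move : Type) where
  Tr : Conf → Move → Conf → Prop
  cost : Conf → Move → ℝ
  IsMin : Conf → Prop

namespace Arena

variable {Conf Move : Type}

/-- A finite run in the arena. -/
structure FinRun (G : Arena Conf Move) where
  n : ℕ
  q : Fin (n + 1) → Conf
  m : Fin n → Move
  valid : ∀ i : Fin n, G.Tr (q i.castSucc) (m i) (q i.succ)

/-- The last configuration of a finite run. -/
def FinRun.last {G : Arena Conf Move} (r : G.FinRun) : Conf := r.q (Fin.last r.n)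

/-- The first configuration of a finite run. -/
def FinRun.first {G : Arena Conf Move} (r : G.FinRun) : Conf := r.q 0

/-- The trivial run consisting of a single configuration. -/
def single (G : Arena Conf Move) (q0 : Conf) : G.FinRun :=
  ⟨0, fun _ => q0, Fin.elim0, fun i => i.elim0⟩

/-- Extending a finite run by one transition. -/
def FinRun.extend {G : Arena Conf Move} (r : G.FinRun) (mv : Move) (q' : Conf)
    (h : G.Tr r.last mv q') : G.FinRun where
  n := r.n + 1
  q := Fin.snoc r.q q'
  m := Fin.snoc r.m mv
  valid := by
    intro i
    induction i using Fin.lastCases with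
    | last =>
        rw [Fin.succ_last, Fin.snoc_last, Fin.snoc_last, Fin.snoc_castSucc]
        exact h
    | cast j =>
        rw [Fin.snoc_castSucc, Fin.snoc_castSucc, ← Fin.castSucc_succ, Fin.snoc_castSucc]
        exact r.valid j

/-- Strategies of player Min: mappings from finite runs to moves that are
available whenever the last configuration belongs to Min. -/
def MinStrategy (G : Arena Conf Move) : Type :=
  {σ : G.FinRun → Move // ∀ r : G.FinRun, G.IsMin r.last → ∃ q', G.Tr r.last (σ r) q'}

/-- Strategies of player Max. -/
def MaxStrategy (G : Arena Conf Move) : Type :=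
  {σ : G.FinRun → Move // ∀ r : G.FinRun, ¬ G.IsMin r.last → ∃ q', G.Tr r.last (σ r) q'}

/-- A strategy is positional if its choice depends only on the last configuration. -/
def Positional {G : Arena Conf Move} (σ : G.FinRun → Move) : Prop :=
  ∀ r r' : G.FinRun, r.last = r'.last → σ r = σ r'

/-- The finite prefixes of the unique play from `q0` in which Min uses `μ`
and Max uses `χ`. -/
def play (G : Arena Conf Move) (μ : G.MinStrategy) (χ : G.MaxStrategy) (q0 : Conf) :
    ℕ → G.FinRun
  | 0 => G.single q0
  | n + 1 =>
    let r := G.play μ χ q0 n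
    if h : G.IsMin r.last then
      r.extend (μ.1 r) (Classical.choose (μ.2 r h)) (Classical.choose_spec (μ.2 r h))
    else
      r.extend (χ.1 r) (Classical.choose (χ.2 r h)) (Classical.choose_spec (χ.2 r h))

/-- Total cost (e.g. total time) of a finite run. -/
def FinRun.time {G : Arena Conf Move} (r : G.FinRun) : ℝ :=
  ∑ i : Fin r.n, G.cost (r.q i.castSucc) (r.m i)

/-- Payoff of player Min (to be minimised): limsup of average cost. -/
def AMin (G : Arena Conf Move) (q0 : Conf) (μ : G.MinStrategy) (χ : G.MaxStrategy) : ℝ :=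
  Filter.limsup (fun n : ℕ => (G.play μ χ q0 n).time / n) Filter.atTop

/-- Payoff of player Max (to be maximised): liminf of average cost. -/
def AMax (G : Arena Conf Move) (q0 : Conf) (μ : G.MinStrategy) (χ : G.MaxStrategy) : ℝ :=
  Filter.liminf (fun n : ℕ => (G.play μ χ q0 n).time / n) Filter.atTop

/-- Upper value of the game at `q0`. -/
def upperVal (G : Arena Conf Move) (q0 : Conf) : ℝ :=
  ⨅ μ : G.MinStrategy, ⨆ χ : G.MaxStrategy, G.AMin q0 μ χ

/-- Lower value of the game at `q0`. -/
def lowerVal (G : Arena Conf Move) (q0 : Conf) : ℝ :=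
  ⨆ χ : G.MaxStrategy, ⨅ μ : G.MinStrategy, G.AMax q0 μ χ

/-- The value of the game at `q0` (meaningful when the game is determined). -/
def val (G : Arena Conf Move) (q0 : Conf) : ℝ := G.upperVal q0

end Arena
/-- `k`-bounded clock valuations. -/
def IsVal (k : ℕ) {C : Type} (ν : C → ℝ) : Prop := ∀ c, 0 ≤ ν c ∧ ν c ≤ (k : ℝ)

/-- Two clock valuations satisfy exactly the same simple clock constraints
`c ⋈ i` and `c − c' ⋈ i` with `i ∈ {0,…,k}` and `⋈ ∈ {<,=,>}` (hence also ≤, ≥). -/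
def RegEq (k : ℕ) {C : Type} (ν ν' : C → ℝ) : Prop :=
  ∀ i : ℕ, i ≤ k → ∀ c c' : C,
    ((ν c < (i : ℝ) ↔ ν' c < (i : ℝ)) ∧ (ν c = (i : ℝ) ↔ ν' c = (i : ℝ)) ∧
      ((i : ℝ) < ν c ↔ (i : ℝ) < ν' c)) ∧
    ((ν c - ν c' < (i : ℝ) ↔ ν' c - ν' c' < (i : ℝ)) ∧
      (ν c - ν c' = (i : ℝ) ↔ ν' c - ν' c' = (i : ℝ)) ∧
      ((i : ℝ) < ν c - ν c' ↔ (i : ℝ) < ν' c - ν' c'))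

/-- An average-time game on a (bounded) timed automaton: a timed automaton
together with a partition of locations between players Min and Max. -/
structure TimedGame where
  L : Type
  C : Type
  A : Type
  finL : Finite L
  finC : Finite C
  finA : Finite A
  k : ℕ
  S : Set (L × (C → ℝ))
  En : A → Set (L × (C → ℝ))
  δ : L → A → L
  ϱ : A → Set C
  LMin : Set L
  bounded : ∀ s ∈ S, IsVal k s.2
  S_zone : (∀ (ℓ : L) (ν ν' : C → ℝ), RegEq k ν ν' → ((ℓ, ν) ∈ S ↔ (ℓ, ν') ∈ S)) ∧
    ∀ ℓ : L, Convex ℝ {ν : C → ℝ | (ℓ, ν) ∈ S}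
  En_sub : ∀ a, En a ⊆ S
  En_zone : ∀ a : A,
    (∀ (ℓ : L) (ν ν' : C → ℝ), RegEq k ν ν' → ((ℓ, ν) ∈ En a ↔ (ℓ, ν') ∈ En a)) ∧
    ∀ ℓ : L, Convex ℝ {ν : C → ℝ | (ℓ, ν) ∈ En a}
  nonstuck : ∀ s ∈ S, ∃ (t : ℝ) (a : A), 0 ≤ t ∧
    (∀ t', 0 ≤ t' → t' ≤ t → (s.1, fun c => s.2 c + t') ∈ S) ∧
    ((s.1, fun c => s.2 c + t) ∈ En a) ∧
    ((δ s.1 a, fun c => if c ∈ ϱ a then 0 else s.2 c + t) ∈ S)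

namespace TimedGame

/-- Configurations of the timed automaton. -/
abbrev Q (T : TimedGame) : Type := T.L × (T.C → ℝ)

/-- Resetting the clocks in `X` to zero. -/
def resetv (T : TimedGame) (ν : T.C → ℝ) (X : Set T.C) : T.C → ℝ :=
  fun c => if c ∈ X then 0 else ν c

/-- The successor configuration after the timed action `τ = (t, a)`. -/
def tsucc (T : TimedGame) (s : T.Q) (τ : ℝ × T.A) : T.Q :=
  (T.δ s.1 τ.2, T.resetv (fun c => s.2 c + τ.1) (T.ϱ τ.2))

/-- The transition relation `s →_τ s'` of the timed automaton. -/
def Trans (T : TimedGame) (s : T.Q) (τ : ℝ × T.A) (s' : T.Q) : Prop :=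
  0 ≤ τ.1 ∧ (∀ t', 0 ≤ t' → t' ≤ τ.1 → (s.1, fun c => s.2 c + t') ∈ T.S) ∧
  ((s.1, fun c => s.2 c + τ.1) ∈ T.En τ.2) ∧ s' = T.tsucc s τ ∧ s' ∈ T.S

/-- The game arena of the average-time game played on the timed automaton. -/
def taArena (T : TimedGame) : Arena {s : T.Q // s ∈ T.S} (ℝ × T.A) where
  Tr := fun s τ s' => T.Trans s.1 τ s'.1
  cost := fun _ τ => τ.1
  IsMin := fun s => s.1.1 ∈ T.LMin

/-- A clock region: an equivalence class of the region equivalence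
(restricted to `k`-bounded valuations). -/
def IsClockRegion (T : TimedGame) (P : Set (T.C → ℝ)) : Prop :=
  ∃ ν : T.C → ℝ, P = {ν' | IsVal T.k ν' ∧ RegEq T.k ν ν'}

/-- Regions: pairs of a location and a clock region. -/
def Region (T : TimedGame) : Type :=
  T.L × {P : Set (T.C → ℝ) // T.IsClockRegion P}

/-- The clock region of a valuation. -/
def clockRegionOf (T : TimedGame) (ν : T.C → ℝ) : {P : Set (T.C → ℝ) // T.IsClockRegion P} :=
  ⟨{ν' | IsVal T.k ν' ∧ RegEq T.k ν ν'}, ⟨ν, rfl⟩⟩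

/-- The region `[s]` of a configuration `s`. -/
def regionOf (T : TimedGame) (s : T.Q) : T.Region := (s.1, T.clockRegionOf s.2)

/-- The configurations `Ω` of the region graphs: pairs of a configuration
of the timed automaton and a region. -/
abbrev Omega (T : TimedGame) : Type := T.Q × T.Region

/-- `(s, (ℓ, P))` is a state of the closed region graph: the locations match
and `s`'s valuation lies in the closure of the clock region `P`. -/
def barS (T : TimedGame) (q : T.Omega) : Prop :=
  q.1.1 = q.2.1 ∧ q.1.2 ∈ closure q.2.2.1

/-- `(s, (ℓ, P))` is a state of the region graph: the locations match and
`s`'s valuation lies in the clock region `P`. -/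
def tildeS (T : TimedGame) (q : T.Omega) : Prop :=
  q.1.1 = q.2.1 ∧ q.1.2 ∈ q.2.2.1

/-- `R →_* R'` : the region `R'` is a time successor of `R`. -/
def timeSucc (T : TimedGame) (R R' : T.Region) : Prop :=
  R.1 = R'.1 ∧ ∀ ν ∈ R.2.1, ∃ t : ℝ, 0 ≤ t ∧
    (∀ t', 0 ≤ t' → t' ≤ t → (R.1, fun c => ν c + t') ∈ T.S) ∧
    (fun c => ν c + t) ∈ R'.2.1

/-- The discrete transition `s →^a s'` of the timed automaton. -/
def astep (T : TimedGame) (s : T.Q) (a : T.A) (s' : T.Q) : Prop :=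
  s ∈ T.S ∧ s' ∈ T.S ∧ s ∈ T.En a ∧ s' = (T.δ s.1 a, T.resetv s.2 (T.ϱ a))

/-- `R →^a R'` at the level of regions. -/
def regAct (T : TimedGame) (R : T.Region) (a : T.A) (R' : T.Region) : Prop :=
  ∃ ν ∈ R.2.1, ∃ ν' ∈ R'.2.1, T.astep (R.1, ν) a (R'.1, ν')

/-- Moves of the region graphs: a delay, an intermediate region, and an action. -/
abbrev RMove (T : TimedGame) : Type := ℝ × T.Region × T.A

/-- Transitions underlying pre-runs: `(s', R') = succ((s,R), (t,R'',a))` with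
`R →_* R'' →^a R'`. -/
def preTrans (T : TimedGame) (q : T.Omega) (m : T.RMove) (q' : T.Omega) : Prop :=
  0 ≤ m.1 ∧ T.timeSucc q.2 m.2.1 ∧ T.regAct m.2.1 m.2.2 q'.2 ∧
  q'.1 = T.tsucc q.1 (m.1, m.2.2)

/-- Labelled transitions of the closed region graph `T̄`. -/
def cTrans (T : TimedGame) (q : T.Omega) (m : T.RMove) (q' : T.Omega) : Prop :=
  T.preTrans q m q' ∧ T.barS q ∧ T.barS q' ∧
  (fun c => q.1.2 c + m.1) ∈ closure m.2.1.2.1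

/-- Labelled transitions of the boundary region graph `T̂`: additionally the
intermediate valuation lies on the boundary of the intermediate region. -/
def bTrans (T : TimedGame) (q : T.Omega) (m : T.RMove) (q' : T.Omega) : Prop :=
  T.cTrans q m q' ∧ (fun c => q.1.2 c + m.1) ∈ frontier m.2.1.2.1

/-- Labelled transitions of the region graph `T̃`. -/
def rTrans (T : TimedGame) (q : T.Omega) (m : T.RMove) (q' : T.Omega) : Prop :=
  T.preTrans q m q' ∧ T.tildeS q ∧ T.tildeS q' ∧
  (fun c => q.1.2 c + m.1) ∈ m.2.1.2.1

/-- The arena of pre-runs over `Ω`. -/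
def preArena (T : TimedGame) : Arena T.Omega T.RMove where
  Tr := T.preTrans
  cost := fun _ m => m.1
  IsMin := fun q => q.2.1 ∈ T.LMin

/-- Finite pre-runs. -/
abbrev PreRunF (T : TimedGame) : Type := (T.preArena).FinRun

/-- Pre-strategies of Min. -/
abbrev MinPre (T : TimedGame) : Type := (T.preArena).MinStrategy

/-- Pre-strategies of Max. -/
abbrev MaxPre (T : TimedGame) : Type := (T.preArena).MaxStrategy

/-- A pre-strategy of Min is a strategy in the closed region graph `T̄`
if it always waits into the closure of the chosen intermediate region. -/
def MinClosed (T : TimedGame) (μ : T.MinPre) : Prop :=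
  ∀ r : T.PreRunF,
    (fun c => (Arena.FinRun.last r).1.2 c + (μ.1 r).1) ∈ closure (μ.1 r).2.1.2.1

def MaxClosed (T : TimedGame) (χ : T.MaxPre) : Prop :=
  ∀ r : T.PreRunF,
    (fun c => (Arena.FinRun.last r).1.2 c + (χ.1 r).1) ∈ closure (χ.1 r).2.1.2.1

/-- Admissible strategies: strategies in the region graph `T̃`. -/
def MinAdmissible (T : TimedGame) (μ : T.MinPre) : Prop :=
  ∀ r : T.PreRunF,
    (fun c => (Arena.FinRun.last r).1.2 c + (μ.1 r).1) ∈ (μ.1 r).2.1.2.1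

def MaxAdmissible (T : TimedGame) (χ : T.MaxPre) : Prop :=
  ∀ r : T.PreRunF,
    (fun c => (Arena.FinRun.last r).1.2 c + (χ.1 r).1) ∈ (χ.1 r).2.1.2.1

/-- Boundary strategies of Min: the delay is the **infimum** of the delays
reaching the closure of the chosen intermediate region. -/
def MinBoundary (T : TimedGame) (μ : T.MinPre) : Prop :=
  ∀ r : T.PreRunF,
    (μ.1 r).1 = sInf {t : ℝ | 0 ≤ t ∧
      (fun c => (Arena.FinRun.last r).1.2 c + t) ∈ closure (μ.1 r).2.1.2.1}

/-- Boundary strategies of Max: the delay is the **supremum** of the delays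
reaching the closure of the chosen intermediate region. -/
def MaxBoundary (T : TimedGame) (χ : T.MaxPre) : Prop :=
  ∀ r : T.PreRunF,
    (χ.1 r).1 = sSup {t : ℝ | 0 ≤ t ∧
      (fun c => (Arena.FinRun.last r).1.2 c + t) ∈ closure (χ.1 r).2.1.2.1}

/-- The sequence of regions visited by a finite pre-run (its type, part 1). -/
def typeConfs (T : TimedGame) (r : T.PreRunF) : ℕ → Option T.Region :=
  fun i => if h : i < r.n + 1 then some ((r.q ⟨i, h⟩).2) else none

/-- The sequence of intermediate regions and actions of a finite pre-run
(its type, part 2). -/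
def typeMoves (T : TimedGame) (r : T.PreRunF) : ℕ → Option (T.Region × T.A) :=
  fun i => if h : i < r.n then some ((r.m ⟨i, h⟩).2) else none

/-- Two finite pre-runs have the same type. -/
def sameType (T : TimedGame) (r r' : T.PreRunF) : Prop :=
  T.typeConfs r = T.typeConfs r' ∧ T.typeMoves r = T.typeMoves r'

/-- The waiting time `t(s, α)` of the boundary timed action `α = (b, c, a)`. -/
def tOf (T : TimedGame) (s : T.Q) (α : ℕ × T.C × T.A) : ℝ :=
  if s.2 α.2.1 ≤ (α.1 : ℝ) then (α.1 : ℝ) - s.2 α.2.1 else 0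

/-- Type-preserving boundary strategies of Min: runs of the same type are
assigned the same intermediate region, action and boundary timed action. -/
def MinTP (T : TimedGame) (μ : T.MinPre) : Prop :=
  T.MinBoundary μ ∧
  ∀ r r' : T.PreRunF, T.sameType r r' →
    (μ.1 r).2 = (μ.1 r').2 ∧
    ∃ (b : ℕ) (c : T.C), b ≤ T.k ∧
      (μ.1 r).1 = T.tOf (Arena.FinRun.last r).1 (b, c, (μ.1 r).2.2) ∧
      (μ.1 r').1 = T.tOf (Arena.FinRun.last r').1 (b, c, (μ.1 r').2.2)

def MaxTP (T : TimedGame) (χ : T.MaxPre) : Prop :=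
  T.MaxBoundary χ ∧
  ∀ r r' : T.PreRunF, T.sameType r r' →
    (χ.1 r).2 = (χ.1 r').2 ∧
    ∃ (b : ℕ) (c : T.C), b ≤ T.k ∧
      (χ.1 r).1 = T.tOf (Arena.FinRun.last r).1 (b, c, (χ.1 r).2.2) ∧
      (χ.1 r').1 = T.tOf (Arena.FinRun.last r').1 (b, c, (χ.1 r').2.2)

/-- `μ_ε` is `ε`-close to the type-preserving boundary strategy `μ` of Min. -/
def EpsCloseMin (T : TimedGame) (μ με : T.MinPre) (ε : ℝ) : Prop :=
  ∀ r : T.PreRunF, (με.1 r).2 = (μ.1 r).2 ∧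
    (fun c => (Arena.FinRun.last r).1.2 c + (με.1 r).1) ∈ (μ.1 r).2.1.2.1 ∧
    (με.1 r).1 ≤ (μ.1 r).1 + ε

/-- `χ_ε` is `ε`-close to the type-preserving boundary strategy `χ` of Max. -/
def EpsCloseMax (T : TimedGame) (χ χε : T.MaxPre) (ε : ℝ) : Prop :=
  ∀ r : T.PreRunF, (χε.1 r).2 = (χ.1 r).2 ∧
    (fun c => (Arena.FinRun.last r).1.2 c + (χε.1 r).1) ∈ (χ.1 r).2.1.2.1 ∧
    (χ.1 r).1 - ε ≤ (χε.1 r).1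

/-- Upper value of the game on the subgraph of region graphs whose strategies
are the pre-strategies satisfying `PMin`, `PMax` respectively. -/
def upperG (T : TimedGame) (PMin : T.MinPre → Prop) (PMax : T.MaxPre → Prop)
    (q : T.Omega) : ℝ :=
  ⨅ μ : {μ : T.MinPre // PMin μ}, ⨆ χ : {χ : T.MaxPre // PMax χ},
    Arena.AMin T.preArena q μ.1 χ.1

/-- Lower value. -/
def lowerG (T : TimedGame) (PMin : T.MinPre → Prop) (PMax : T.MaxPre → Prop)
    (q : T.Omega) : ℝ :=
  ⨆ χ : {χ : T.MaxPre // PMax χ}, ⨅ μ : {μ : T.MinPre // PMin μ},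
    Arena.AMax T.preArena q μ.1 χ.1

def upperBar (T : TimedGame) : T.Omega → ℝ := T.upperG T.MinClosed T.MaxClosed
def lowerBar (T : TimedGame) : T.Omega → ℝ := T.lowerG T.MinClosed T.MaxClosed
/-- The value of the average-time game on the closed region graph `T̄`. -/
def valBar (T : TimedGame) : T.Omega → ℝ := T.upperBar

def upperHat (T : TimedGame) : T.Omega → ℝ := T.upperG T.MinBoundary T.MaxBoundary
def lowerHat (T : TimedGame) : T.Omega → ℝ := T.lowerG T.MinBoundary T.MaxBoundary
/-- The value of the average-time game on the boundary region graph `T̂`. -/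
def valHat (T : TimedGame) : T.Omega → ℝ := T.upperHat

def upperTilde (T : TimedGame) : T.Omega → ℝ := T.upperG T.MinAdmissible T.MaxAdmissible
def lowerTilde (T : TimedGame) : T.Omega → ℝ := T.lowerG T.MinAdmissible T.MaxAdmissible
/-- The value of the average-time game on the region graph `T̃`. -/
def valTilde (T : TimedGame) : T.Omega → ℝ := T.upperTilde

/-- A function is simple on a set `X` of configurations. -/
def SimpleOn (T : TimedGame) (X : Set T.Omega) (F : T.Omega → ℝ) : Prop :=
  (∃ e : ℤ, ∀ q ∈ X, F q = (e : ℝ)) ∨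
  (∃ (e : ℤ) (c : T.C), ∀ q ∈ X, F q = (e : ℝ) - q.1.2 c)

/-- A function on the configurations of the closed region graph is regionally
simple. -/
def RegionallySimple (T : TimedGame) (F : T.Omega → ℝ) : Prop :=
  ∀ R : T.Region, T.SimpleOn {q : T.Omega | T.barS q ∧ q.2 = R} F

/-- A function on the configurations of the closed region graph is regionally
constant. -/
def RegionallyConstant (T : TimedGame) (F : T.Omega → ℝ) : Prop :=
  ∀ R : T.Region, ∃ v : ℝ, ∀ q : T.Omega, T.barS q → q.2 = R → F q = v

/-- The configuration `(s, [s])` of the region graphs determined by a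
configuration `s` of the timed automaton. -/
def confOf (T : TimedGame) (s : T.Q) : T.Omega := (s, T.regionOf s)

/-- A region is thin if some clock has an integer value throughout its closure. -/
def Thin (T : TimedGame) (R : T.Region) : Prop :=
  ∃ c : T.C, ∀ ν ∈ closure R.2.1, ∃ m : ℤ, ν c = (m : ℝ)

/-- `R'` is the immediate time successor of `R`. -/
def ImmTimeSucc (T : TimedGame) (R R' : T.Region) : Prop :=
  R.1 = R'.1 ∧ ∀ ν ∈ R.2.1, ∃ ε : ℝ, 0 < ε ∧
    ∀ t : ℝ, 0 < t → t < ε → (fun c => ν c + t) ∈ R'.2.1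

end TimedGame

/-! A run with total time `τ` and final valuation `ν` last reset clock `x` at date `τ - ν x`
(shifted by the initial value of `x`). A boundary timed action `(b, c, a)` waits `max (b - ν c) 0`,
hence ends at date `max (b + (τ - ν c)) τ`, which is monotone in `τ` and in the reset dates. So, by
induction along two runs of the same type, the run in which the deviating player uses the
type-preserving boundary strategy stays no later than the other one (in time spent and in every
reset date) when that player is Min, and no earlier when it is Max: at that player's turns the
boundary strategy of Min waits at most, and that of Max at least, as long as any delay into the
closure of the same intermediate region, and at the opponent's turns its type-preserving strategy
plays the same boundary timed action in both runs. -/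

namespace Arena

variable {Conf Move : Type} {G : Arena Conf Move}

lemma FinRun.time_extend (r : G.FinRun) (mv : Move) (q' : Conf) (h : G.Tr r.last mv q') :
    (r.extend mv q' h).time = r.time + G.cost r.last mv := by
  unfold FinRun.time FinRun.extend
  rw [Fin.sum_univ_castSucc]
  simp [FinRun.last, Fin.snoc_castSucc, Fin.snoc_last]

lemma FinRun.last_extend (r : G.FinRun) (mv : Move) (q' : Conf) (h : G.Tr r.last mv q') :
    (r.extend mv q' h).last = q' := by
  simp [FinRun.last, FinRun.extend, Fin.snoc_last]

def nextMove (μ : G.MinStrategy) (χ : G.MaxStrategy) (r : G.FinRun) : Move :=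
  if G.IsMin r.last then μ.1 r else χ.1 r

lemma exists_play_succ_eq_extend (μ : G.MinStrategy) (χ : G.MaxStrategy) (q0 : Conf) (n : ℕ) :
    ∃ q' h, G.play μ χ q0 (n + 1) =
      (G.play μ χ q0 n).extend (nextMove μ χ (G.play μ χ q0 n)) q' h := by
  unfold nextMove
  by_cases h : G.IsMin (G.play μ χ q0 n).last
  · simp only [if_pos h]
    exact ⟨_, Classical.choose_spec (μ.2 _ h), by rw [play, dif_pos h]⟩
  · simp only [if_neg h]
    exact ⟨_, Classical.choose_spec (χ.2 _ h), by rw [play, dif_neg h]⟩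

lemma play_n (μ : G.MinStrategy) (χ : G.MaxStrategy) (q0 : Conf) (n : ℕ) :
    (G.play μ χ q0 n).n = n := by
  induction n with
  | zero => rfl
  | succ n ih =>
    obtain ⟨q', h, e⟩ := exists_play_succ_eq_extend μ χ q0 n
    rw [e]
    exact congrArg (· + 1) ih

end Arena

namespace TimedGame

variable {T : TimedGame}

lemma preArena_cost (q : T.Omega) (m : T.RMove) : T.preArena.cost q m = m.1 := rfl

lemma tOf_eq_max (s : T.Q) (b : ℕ) (c : T.C) (a : T.A) :
    T.tOf s (b, c, a) = max ((b : ℝ) - s.2 c) 0 := by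
  unfold tOf
  split_ifs with h
  · exact (max_eq_left (sub_nonneg.mpr h)).symm
  · exact (max_eq_right (sub_nonpos.mpr (le_of_not_ge h))).symm

lemma sameType.symm {r₁ r₂ : T.PreRunF} (h : T.sameType r₁ r₂) : T.sameType r₂ r₁ :=
  ⟨h.1.symm, h.2.symm⟩

lemma typeConfs_n (r : T.PreRunF) : T.typeConfs r r.n = some r.last.2 := by
  simp only [typeConfs, dif_pos (Nat.lt_succ_self r.n)]
  rfl

lemma typeMoves_extend_n (r : T.PreRunF) (m : T.RMove) (q' : T.Omega)
    (h : T.preArena.Tr r.last m q') : T.typeMoves (r.extend m q' h) r.n = some m.2 := by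
  have hlt : r.n < (r.extend m q' h).n := Nat.lt_succ_self r.n
  rw [typeMoves, dif_pos hlt]
  exact congrArg (some ·.2) (Fin.snoc_last (α := fun _ => T.RMove) m r.m)

lemma sameType.last_region_eq {r₁ r₂ : T.PreRunF} (hs : T.sameType r₁ r₂) (hn : r₁.n = r₂.n) :
    r₁.last.2 = r₂.last.2 := by
  have h := congrFun hs.1 r₁.n
  rwa [typeConfs_n, hn, typeConfs_n, Option.some_inj] at h

section Plays

variable {μ₁ μ₂ : T.MinPre} {χ₁ χ₂ : T.MaxPre} {q : T.Omega}

lemma last_region_eq_of_sameType_play {n : ℕ}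
    (hs : T.sameType (T.preArena.play μ₁ χ₁ q n) (T.preArena.play μ₂ χ₂ q n)) :
    (T.preArena.play μ₁ χ₁ q n).last.2 = (T.preArena.play μ₂ χ₂ q n).last.2 :=
  hs.last_region_eq (by rw [Arena.play_n, Arena.play_n])

lemma typeMoves_play_succ (μ : T.MinPre) (χ : T.MaxPre) (q : T.Omega) (n : ℕ) :
    T.typeMoves (T.preArena.play μ χ q (n + 1)) n =
      some (Arena.nextMove μ χ (T.preArena.play μ χ q n)).2 := by
  obtain ⟨q', h, e⟩ := Arena.exists_play_succ_eq_extend μ χ q n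
  rw [e, ← typeMoves_extend_n _ _ _ h, Arena.play_n]

lemma nextMove_label_eq_of_sameType_play_succ {n : ℕ}
    (hs : T.sameType (T.preArena.play μ₁ χ₁ q (n + 1)) (T.preArena.play μ₂ χ₂ q (n + 1))) :
    (Arena.nextMove μ₁ χ₁ (T.preArena.play μ₁ χ₁ q n)).2 =
      (Arena.nextMove μ₂ χ₂ (T.preArena.play μ₂ χ₂ q n)).2 := by
  have h := congrFun hs.2 n
  rwa [typeMoves_play_succ, typeMoves_play_succ, Option.some_inj] at h

lemma isMin_iff_of_sameType_play {n : ℕ}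
    (hs : T.sameType (T.preArena.play μ₁ χ₁ q n) (T.preArena.play μ₂ χ₂ q n)) :
    T.preArena.IsMin (T.preArena.play μ₁ χ₁ q n).last ↔
      T.preArena.IsMin (T.preArena.play μ₂ χ₂ q n).last := by
  change _ ∈ T.LMin ↔ _ ∈ T.LMin
  rw [last_region_eq_of_sameType_play hs]

lemma nextMove_delay_nonneg (μ : T.MinPre) (χ : T.MaxPre) (q : T.Omega) (n : ℕ) :
    0 ≤ (Arena.nextMove μ χ (T.preArena.play μ χ q n)).1 := by
  obtain ⟨q', h, -⟩ := Arena.exists_play_succ_eq_extend μ χ q n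
  exact h.1

end Plays

lemma closure_clockRegion_subset {P : Set (T.C → ℝ)} (hP : T.IsClockRegion P) (c : T.C) :
    closure P ⊆ {w | w c ≤ T.k} := by
  obtain ⟨ν, rfl⟩ := hP
  exact closure_minimal (fun w hw => (hw.1 c).2) (isClosed_le (continuous_apply c) continuous_const)

lemma bddAbove_delays_closure_clockRegion [Nonempty T.C] (ν : T.C → ℝ) (R : T.Region) :
    BddAbove {t : ℝ | 0 ≤ t ∧ (fun c => ν c + t) ∈ closure R.2.1} := by
  obtain ⟨c⟩ := ‹Nonempty T.C›
  refine ⟨T.k - ν c, fun t ht => ?_⟩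
  have h : ν c + t ≤ T.k := closure_clockRegion_subset R.2.2 c ht.2
  linarith

lemma MinBoundary.delay_le {μ : T.MinPre} (hμ : T.MinBoundary μ) (r : T.PreRunF) {t : ℝ}
    (ht0 : 0 ≤ t) (ht : (fun c => r.last.1.2 c + t) ∈ closure (μ.1 r).2.1.2.1) :
    (μ.1 r).1 ≤ t := by
  rw [hμ r]
  exact csInf_le ⟨0, fun _ h => h.1⟩ ⟨ht0, ht⟩

lemma MaxBoundary.le_delay [Nonempty T.C] {χ : T.MaxPre} (hχ : T.MaxBoundary χ)
    (r : T.PreRunF) {t : ℝ} (ht0 : 0 ≤ t)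
    (ht : (fun c => r.last.1.2 c + t) ∈ closure (χ.1 r).2.1.2.1) :
    t ≤ (χ.1 r).1 := by
  rw [hχ r]
  exact le_csSup (bddAbove_delays_closure_clockRegion _ _) ⟨ht0, ht⟩

def BoundarySeparated (r₁ : T.PreRunF) (m₁ : T.RMove) (r₂ : T.PreRunF) (m₂ : T.RMove) : Prop :=
  ∃ (b : ℕ) (c : T.C),
    m₁.1 ≤ T.tOf r₁.last.1 (b, c, m₁.2.2) ∧ T.tOf r₂.last.1 (b, c, m₂.2.2) ≤ m₂.1

lemma MinTP.boundarySeparated {μ : T.MinPre} (hμ : T.MinTP μ) {r₁ r₂ : T.PreRunF}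
    (hs : T.sameType r₁ r₂) {m : T.RMove} (hm : m.2 = (μ.1 r₁).2) (hm0 : 0 ≤ m.1)
    (hcl : (fun c => r₂.last.1.2 c + m.1) ∈ closure m.2.1.2.1) :
    T.BoundarySeparated r₁ (μ.1 r₁) r₂ m := by
  obtain ⟨hlabel, b, c, -, h₁, h₂⟩ := hμ.2 r₁ r₂ hs
  refine ⟨b, c, h₁.le, ?_⟩
  rw [hm, hlabel, ← h₂]
  exact hμ.1.delay_le r₂ hm0 (by rwa [← hlabel, ← hm])

lemma MaxTP.boundarySeparated {χ : T.MaxPre} (hχ : T.MaxTP χ) {r₁ r₂ : T.PreRunF}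
    (hs : T.sameType r₁ r₂) {m : T.RMove} (hm : m.2 = (χ.1 r₂).2) (hm0 : 0 ≤ m.1)
    (hcl : (fun c => r₁.last.1.2 c + m.1) ∈ closure m.2.1.2.1) :
    T.BoundarySeparated r₁ m r₂ (χ.1 r₂) := by
  obtain ⟨hlabel, b, c, -, h₁, h₂⟩ := hχ.2 r₁ r₂ hs
  have : Nonempty T.C := ⟨c⟩
  refine ⟨b, c, ?_, h₂.ge⟩
  rw [hm, ← hlabel, ← h₁]
  exact hχ.1.le_delay r₁ hm0 (by rwa [hlabel, ← hm])

lemma boundarySeparated_of_typePreserving {σ : T.PreRunF → T.RMove}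
    (hσ : ∀ r₁ r₂ : T.PreRunF, T.sameType r₁ r₂ → (σ r₁).2 = (σ r₂).2 ∧
      ∃ (b : ℕ) (c : T.C), b ≤ T.k ∧ (σ r₁).1 = T.tOf r₁.last.1 (b, c, (σ r₁).2.2) ∧
        (σ r₂).1 = T.tOf r₂.last.1 (b, c, (σ r₂).2.2))
    {r₁ r₂ : T.PreRunF} (hs : T.sameType r₁ r₂) : T.BoundarySeparated r₁ (σ r₁) r₂ (σ r₂) := by
  obtain ⟨-, b, c, -, h₁, h₂⟩ := hσ r₁ r₂ hs
  exact ⟨b, c, h₁.le, h₂.ge⟩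

def NoLaterThan (r₁ r₂ : T.PreRunF) : Prop :=
  r₁.time ≤ r₂.time ∧ ∀ x, r₁.time - r₁.last.1.2 x ≤ r₂.time - r₂.last.1.2 x

lemma NoLaterThan.time_add_tOf_le {r₁ r₂ : T.PreRunF} (h : T.NoLaterThan r₁ r₂)
    (b : ℕ) (c : T.C) (a₁ a₂ : T.A) :
    r₁.time + T.tOf r₁.last.1 (b, c, a₁) ≤ r₂.time + T.tOf r₂.last.1 (b, c, a₂) := by
  have hc := h.2 c
  rw [tOf_eq_max, tOf_eq_max]
  rcases max_cases ((b : ℝ) - r₁.last.1.2 c) 0 with ⟨e, -⟩ | ⟨e, -⟩ <;> rw [e] <;>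
    linarith [h.1, le_max_left ((b : ℝ) - r₂.last.1.2 c) 0,
      le_max_right ((b : ℝ) - r₂.last.1.2 c) 0]

lemma NoLaterThan.extend {r₁ r₂ : T.PreRunF} (hr : T.NoLaterThan r₁ r₂) {m₁ m₂ : T.RMove}
    (hsep : T.BoundarySeparated r₁ m₁ r₂ m₂) (ha : m₁.2.2 = m₂.2.2) {q₁ q₂ : T.Omega}
    (h₁ : T.preArena.Tr r₁.last m₁ q₁) (h₂ : T.preArena.Tr r₂.last m₂ q₂) :
    T.NoLaterThan (r₁.extend m₁ q₁ h₁) (r₂.extend m₂ q₂ h₂) := by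
  obtain ⟨b, c, hm₁, hm₂⟩ := hsep
  have htime : r₁.time + m₁.1 ≤ r₂.time + m₂.1 := by
    linarith [hr.time_add_tOf_le b c m₁.2.2 m₂.2.2]
  rw [NoLaterThan, Arena.FinRun.time_extend, Arena.FinRun.time_extend, Arena.FinRun.last_extend,
    Arena.FinRun.last_extend, preArena_cost, preArena_cost, h₁.2.2.2, h₂.2.2.2]
  refine ⟨htime, fun x => ?_⟩
  simp only [tsucc, resetv, ha]
  split_ifs
  · linarith
  · linarith [hr.2 x]

theorem noLaterThan_play {μ₁ μ₂ : T.MinPre} {χ₁ χ₂ : T.MaxPre} {q : T.Omega}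
    (hsame : ∀ n, T.sameType (T.preArena.play μ₁ χ₁ q n) (T.preArena.play μ₂ χ₂ q n))
    (hsep : ∀ n, T.BoundarySeparated
      (T.preArena.play μ₁ χ₁ q n) (Arena.nextMove μ₁ χ₁ (T.preArena.play μ₁ χ₁ q n))
      (T.preArena.play μ₂ χ₂ q n) (Arena.nextMove μ₂ χ₂ (T.preArena.play μ₂ χ₂ q n)))
    (n : ℕ) : T.NoLaterThan (T.preArena.play μ₁ χ₁ q n) (T.preArena.play μ₂ χ₂ q n) := by
  induction n with
  | zero => exact ⟨le_rfl, fun _ => le_rfl⟩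
  | succ n ih =>
    obtain ⟨q₁, h₁, e₁⟩ := Arena.exists_play_succ_eq_extend μ₁ χ₁ q n
    obtain ⟨q₂, h₂, e₂⟩ := Arena.exists_play_succ_eq_extend μ₂ χ₂ q n
    rw [e₁, e₂]
    exact ih.extend (hsep n)
      (congrArg Prod.snd (nextMove_label_eq_of_sameType_play_succ (hsame (n + 1)))) h₁ h₂

theorem noLaterThan_play_of_minTP {χ : T.MaxPre} (hχ : T.MaxTP χ) {μ μ' : T.MinPre}
    (hμ : T.MinClosed μ) (hμ' : T.MinTP μ') {q : T.Omega}
    (hsame : ∀ n, T.sameType (T.preArena.play μ' χ q n) (T.preArena.play μ χ q n)) (n : ℕ) :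
    T.NoLaterThan (T.preArena.play μ' χ q n) (T.preArena.play μ χ q n) := by
  refine noLaterThan_play hsame (fun n => ?_) n
  have hlabel := nextMove_label_eq_of_sameType_play_succ (hsame (n + 1))
  have h0 := nextMove_delay_nonneg μ χ q n
  have hturn := isMin_iff_of_sameType_play (hsame n)
  unfold Arena.nextMove at hlabel h0 ⊢
  by_cases h : T.preArena.IsMin (T.preArena.play μ χ q n).last
  · simp only [if_pos h, if_pos (hturn.mpr h)] at hlabel h0 ⊢
    exact hμ'.boundarySeparated (hsame n) hlabel.symm h0 (hμ _)
  · simp only [if_neg h, if_neg (mt hturn.mp h)]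
    exact boundarySeparated_of_typePreserving hχ.2 (hsame n)

theorem noLaterThan_play_of_maxTP {μ : T.MinPre} (hμ : T.MinTP μ) {χ χ' : T.MaxPre}
    (hχ : T.MaxClosed χ) (hχ' : T.MaxTP χ') {q : T.Omega}
    (hsame : ∀ n, T.sameType (T.preArena.play μ χ' q n) (T.preArena.play μ χ q n)) (n : ℕ) :
    T.NoLaterThan (T.preArena.play μ χ q n) (T.preArena.play μ χ' q n) := by
  have hsame' := fun n => (hsame n).symm
  refine noLaterThan_play hsame' (fun n => ?_) n
  have hlabel := nextMove_label_eq_of_sameType_play_succ (hsame' (n + 1))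
  have h0 := nextMove_delay_nonneg μ χ q n
  have hturn := isMin_iff_of_sameType_play (hsame' n)
  unfold Arena.nextMove at hlabel h0 ⊢
  by_cases h : T.preArena.IsMin (T.preArena.play μ χ q n).last
  · simp only [if_pos h, if_pos (hturn.mp h)]
    exact boundarySeparated_of_typePreserving hμ.2 (hsame' n)
  · simp only [if_neg h, if_neg (mt hturn.mpr h)] at hlabel h0 ⊢
    exact hχ'.boundarySeparated (hsame' n) hlabel h0 (hχ _)

end TimedGame

/-- Against a type-preserving boundary strategy of the opponent, switching to a
type-matching type-preserving boundary strategy can only improve the total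
time of every finite prefix of the run. -/
theorem nstep_typePreserving_is_better (T : TimedGame) :
    (∀ χ : T.MaxPre, T.MaxTP χ → ∀ μ : T.MinPre, T.MinClosed μ →
      ∀ q : T.Omega, T.barS q → ∀ μ' : T.MinPre, T.MinTP μ' →
      (∀ n : ℕ, T.sameType (Arena.play T.preArena μ' χ q n)
        (Arena.play T.preArena μ χ q n)) →
      ∀ n : ℕ, Arena.FinRun.time (Arena.play T.preArena μ' χ q n) ≤
        Arena.FinRun.time (Arena.play T.preArena μ χ q n)) ∧
    (∀ μ : T.MinPre, T.MinTP μ → ∀ χ : T.MaxPre, T.MaxClosed χ →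
      ∀ q : T.Omega, T.barS q → ∀ χ' : T.MaxPre, T.MaxTP χ' →
      (∀ n : ℕ, T.sameType (Arena.play T.preArena μ χ' q n)
        (Arena.play T.preArena μ χ q n)) →
      ∀ n : ℕ, Arena.FinRun.time (Arena.play T.preArena μ χ q n) ≤
        Arena.FinRun.time (Arena.play T.preArena μ χ' q n)) :=
  ⟨fun _ hχ _ hμ _ _ _ hμ' hsame n => (T.noLaterThan_play_of_minTP hχ hμ hμ' hsame n).1,
    fun _ hμ _ hχ _ _ _ hχ' hsame n => (T.noLaterThan_play_of_maxTP hμ hχ hχ' hsame n).1⟩
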